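/- Let 𝒫 be a nonempty set of Borel probability measures on ℝ^n with sublinear expectation Ê[ξ] := sup_{P∈𝒫} E_P[ξ], let X_1,…,X_n be the coordinate random variables, and let F_j := σ(X_1,…,X_j). Fix 1 ≤ j < n and suppose X_{j+1} is independent of (X_1,…,X_j) under Ê, and that Ê[|X_{j+1}|^{1+α}] < ∞ for some α > 0. Then for every Borel probability measure P on ℝ^n satisfying E_P[φ] ≤ Ê[φ] for all bounded Lipschitz φ : ℝ^n → ℝ, one has −Ê[−X_{j+1}] ≤ E_P[X_{j+1} | F_j] ≤ Ê[X_{j+1}], P-almost surely. -/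

import Mathlib

/-!
Let `ψ ≥ 0` be a bounded Lipschitz function of `(x₁, …, x_j)` and `g` a bounded Lipschitz
function of `x_{j+1}`. By independence, positive homogeneity and translation invariance of `Ê`,
the test function `ψ · (g - Ê[g(X_{j+1})])` has `Ê`-expectation `0`, so domination of `P` gives
`E_P[ψ g(X_{j+1})] ≤ Ê[g(X_{j+1})] E_P[ψ]`. Clipping `±X_{j+1}` at level `N` moves every `E_Q`,
`Q ∈ 𝒫`, by at most `M / N^α`, where `M` bounds the `(1+α)`-moments, so letting `N → ∞` gives the
same inequality for `g = ±id`. Approximating indicators of closed sets by Lipschitz functions, and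
Borel sets from inside by closed sets, turns it into `∫_A ±X_{j+1} dP ≤ Ê[±X_{j+1}] P(A)` for every
`A ∈ F_j`, which are the two bounds on `E_P[X_{j+1} | F_j]`.
-/

open MeasureTheory Filter Topology

/-- Sublinear expectation on `ℝ^n` associated with a set of probability measures:
`Ê[ξ] = sup_{P ∈ Pset} E_P[ξ]`. -/
noncomputable def SE (n : ℕ) (Pset : Set (Measure (Fin n → ℝ)))
    (ξ : (Fin n → ℝ) → ℝ) : ℝ :=
  ⨆ P : Pset, ∫ x, ξ x ∂(P : Measure (Fin n → ℝ))

/-- Bounded Lipschitz real-valued functions. -/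
def BLip {E : Type*} [PseudoMetricSpace E] (φ : E → ℝ) : Prop :=
  (∃ K : NNReal, LipschitzWith K φ) ∧ ∃ M : ℝ, ∀ x, |φ x| ≤ M

lemma lipschitzWith_one_comp_right {ι κ E : Type*} [Fintype ι] [Fintype κ]
    [PseudoEMetricSpace E] (g : κ → ι) :
    LipschitzWith 1 fun (x : ι → E) (k : κ) => x (g k) :=
  LipschitzWith.of_edist_le fun x y => edist_pi_le_iff.2 fun k => edist_le_pi_edist x y (g k)

namespace BLip

variable {E F : Type*} [PseudoMetricSpace E] [PseudoMetricSpace F]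

lemma comp_lipschitzWith {φ : F → ℝ} (hφ : BLip φ) {g : E → F} {K : NNReal}
    (hg : LipschitzWith K g) : BLip fun x => φ (g x) := by
  obtain ⟨⟨K', hK'⟩, M, hM⟩ := hφ
  exact ⟨⟨K' * K, hK'.comp hg⟩, M, fun x => hM (g x)⟩

lemma continuous {φ : E → ℝ} (hφ : BLip φ) : Continuous φ :=
  hφ.1.choose_spec.continuous

lemma sub_const {φ : E → ℝ} (hφ : BLip φ) (c : ℝ) : BLip fun x => φ x - c := by
  obtain ⟨⟨K, hK⟩, M, hM⟩ := hφ
  refine ⟨⟨K, hK.sub (LipschitzWith.const c) |>.weaken (by simp)⟩, M + |c|, fun x => ?_⟩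
  exact (abs_sub _ _).trans (by linarith [hM x])

lemma mul {φ ψ : E → ℝ} (hφ : BLip φ) (hψ : BLip ψ) : BLip fun x => φ x * ψ x := by
  obtain ⟨⟨K, hK⟩, M, hM⟩ := hφ
  obtain ⟨⟨L, hL⟩, N, hN⟩ := hψ
  replace hM x : |φ x| ≤ M.toNNReal := (hM x).trans (Real.le_coe_toNNReal M)
  replace hN x : |ψ x| ≤ N.toNNReal := (hN x).trans (Real.le_coe_toNNReal N)
  refine ⟨⟨M.toNNReal * L + N.toNNReal * K, LipschitzWith.of_dist_le_mul fun x y => ?_⟩,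
    M.toNNReal * N.toNNReal, fun x => ?_⟩
  · have hψxy : |ψ x - ψ y| ≤ L * dist x y := hL.dist_le_mul x y
    have hφxy : |φ x - φ y| ≤ K * dist x y := hK.dist_le_mul x y
    rw [Real.dist_eq]
    calc |φ x * ψ x - φ y * ψ y| = |φ x * (ψ x - ψ y) + (φ x - φ y) * ψ y| := by ring_nf
      _ ≤ |φ x| * |ψ x - ψ y| + |φ x - φ y| * |ψ y| := by
        rw [← abs_mul, ← abs_mul]; exact abs_add_le _ _
      _ ≤ M.toNNReal * (L * dist x y) + K * dist x y * N.toNNReal := by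
        gcongr
        exacts [hM x, hN y]
      _ = ↑(M.toNNReal * L + N.toNNReal * K) * dist x y := by push_cast; ring
  · rw [abs_mul]
    exact mul_le_mul (hM x) (hN x) (abs_nonneg _) (NNReal.coe_nonneg _)

lemma integrable [MeasurableSpace E] [OpensMeasurableSpace E] {μ : Measure E}
    [IsFiniteMeasure μ] {φ : E → ℝ} (hφ : BLip φ) : Integrable φ μ := by
  obtain ⟨M, hM⟩ := hφ.2
  exact .of_bound hφ.continuous.aestronglyMeasurable M (ae_of_all _ hM)

end BLip

noncomputable def trunc (N t : ℝ) : ℝ := max (min t N) (-N)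

section Truncation

variable {N t : ℝ}

lemma lipschitzWith_trunc (N : ℝ) : LipschitzWith 1 (trunc N) :=
  (LipschitzWith.id.min_const N).max_const (-N)

lemma abs_trunc_le (hN : 0 ≤ N) : |trunc N t| ≤ N := by
  unfold trunc; rw [abs_le]; constructor <;> cases max_cases (min t N) (-N) <;>
    cases min_cases t N <;> linarith

lemma trunc_of_abs_le (h : |t| ≤ N) : trunc N t = t := by
  rw [abs_le] at h
  rw [trunc, min_eq_left h.2, max_eq_left h.1]

lemma abs_trunc_le_abs (hN : 0 ≤ N) : |trunc N t| ≤ |t| := by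
  unfold trunc; rw [abs_le]; constructor <;> cases max_cases (min t N) (-N) <;>
    cases min_cases t N <;> cases abs_cases t <;> linarith

lemma abs_trunc_sub_le (hN : 0 ≤ N) : |trunc N t - t| ≤ |t| := by
  unfold trunc; rw [abs_le]; constructor <;> cases max_cases (min t N) (-N) <;>
    cases min_cases t N <;> cases abs_cases t <;> linarith

lemma abs_trunc_sub_le_rpow {α : ℝ} (hN : 0 < N) (hα : 0 ≤ α) :
    |trunc N t - t| ≤ |t| ^ (1 + α) / N ^ α := by
  rcases le_or_gt |t| N with h | h
  · rw [trunc_of_abs_le h, sub_self, abs_zero]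
    positivity
  · have ht : 0 < |t| := hN.trans h
    rw [le_div_iff₀ (by positivity), Real.rpow_add ht, Real.rpow_one]
    exact mul_le_mul (abs_trunc_sub_le hN.le) (Real.rpow_le_rpow hN.le h.le hα) (by positivity)
      (abs_nonneg t)

lemma tendsto_trunc (t : ℝ) : Tendsto (fun N : ℕ => trunc N t) atTop (𝓝 t) :=
  tendsto_const_nhds.congr' <| (eventually_ge_atTop ⌈|t|⌉₊).mono fun _ hN =>
    (trunc_of_abs_le ((Nat.le_ceil _).trans (Nat.cast_le.2 hN))).symm

lemma bLip_trunc_comp {E : Type*} [PseudoMetricSpace E] (hN : 0 ≤ N) {g : E → ℝ} {K : NNReal}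
    (hg : LipschitzWith K g) : BLip fun x => trunc N (g x) :=
  ⟨⟨1 * K, (lipschitzWith_trunc N).comp hg⟩, N, fun _ => abs_trunc_le hN⟩

lemma tendsto_integral_mul_trunc {Ω : Type*} [MeasurableSpace Ω] {μ : Measure Ω}
    {w Y : Ω → ℝ} {C : ℝ} (hw : AEStronglyMeasurable w μ) (hwC : ∀ x, |w x| ≤ C)
    (hY : Integrable Y μ) :
    Tendsto (fun N : ℕ => ∫ x, w x * trunc N (Y x) ∂μ) atTop (𝓝 (∫ x, w x * Y x ∂μ)) := by
  refine tendsto_integral_of_dominated_convergence (fun x => C * |Y x|)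
    (fun N => hw.mul ((lipschitzWith_trunc N).continuous.comp_aestronglyMeasurable hY.1))
    (hY.abs.const_mul C) (fun N => ae_of_all _ fun x => ?_)
    (ae_of_all _ fun x => (tendsto_trunc (Y x)).const_mul (w x))
  rw [Real.norm_eq_abs, abs_mul]
  exact mul_le_mul (hwC x) (abs_trunc_le_abs (Nat.cast_nonneg N)) (abs_nonneg _)
    ((abs_nonneg _).trans (hwC x))

end Truncation

section Moments

variable {Ω : Type*} [MeasurableSpace Ω] {μ : Measure Ω} {f : Ω → ℝ} {α : ℝ}

lemma abs_le_one_add_abs_rpow (hα : 0 ≤ α) (t : ℝ) : |t| ≤ 1 + |t| ^ (1 + α) := by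
  rcases le_total |t| 1 with h | h
  · linarith [Real.rpow_nonneg (abs_nonneg t) (1 + α)]
  · linarith [Real.self_le_rpow_of_one_le h (by linarith : (1 : ℝ) ≤ 1 + α)]

lemma integrable_of_integrable_abs_rpow [IsFiniteMeasure μ] (hα : 0 ≤ α)
    (hf : AEStronglyMeasurable f μ) (h : Integrable (fun x => |f x| ^ (1 + α)) μ) :
    Integrable f μ :=
  ((integrable_const 1).add h).mono' hf (ae_of_all _ fun x => abs_le_one_add_abs_rpow hα (f x))

lemma integral_abs_le_one_add_integral_abs_rpow [IsProbabilityMeasure μ] (hα : 0 ≤ α)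
    (hf : AEStronglyMeasurable f μ) (h : Integrable (fun x => |f x| ^ (1 + α)) μ) :
    ∫ x, |f x| ∂μ ≤ 1 + ∫ x, |f x| ^ (1 + α) ∂μ := by
  have hdom : Integrable (fun x => 1 + |f x| ^ (1 + α)) μ := (integrable_const 1).add h
  have hle := integral_mono (integrable_of_integrable_abs_rpow hα hf h).abs hdom
    fun x => abs_le_one_add_abs_rpow hα (f x)
  rwa [integral_add (integrable_const 1) h, integral_const, probReal_univ, one_smul] at hle

lemma integrable_of_forall_integral_min_abs_le [IsFiniteMeasure μ] (hf : Measurable f) {C : ℝ}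
    (h : ∀ N : ℕ, ∫ x, min |f x| N ∂μ ≤ C) : Integrable f μ := by
  refine ⟨hf.aestronglyMeasurable, ?_⟩
  have hmin (N : ℕ) : Integrable (fun x => min |f x| N) μ :=
    .of_bound (hf.abs.min measurable_const).aestronglyMeasurable N (ae_of_all _ fun x => by
      rw [Real.norm_eq_abs, abs_of_nonneg (le_min (abs_nonneg _) (Nat.cast_nonneg N))]
      exact min_le_right _ _)
  have henorm x : ‖f x‖ₑ = ⨆ N : ℕ, ENNReal.ofReal (min |f x| N) := by
    refine le_antisymm ?_ (iSup_le fun N => ?_)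
    · refine le_iSup_of_le ⌈|f x|⌉₊ ?_
      rw [min_eq_left (Nat.le_ceil _), Real.enorm_eq_ofReal_abs]
    · rw [Real.enorm_eq_ofReal_abs]
      exact ENNReal.ofReal_le_ofReal (min_le_left _ _)
  calc ∫⁻ x, ‖f x‖ₑ ∂μ = ⨆ N : ℕ, ∫⁻ x, ENNReal.ofReal (min |f x| N) ∂μ := by
        simp_rw [henorm]
        exact lintegral_iSup (fun N => (hf.abs.min measurable_const).ennreal_ofReal)
          fun N N' hNN' x => ENNReal.ofReal_le_ofReal (min_le_min le_rfl (Nat.cast_le.2 hNN'))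
    _ ≤ ENNReal.ofReal C := iSup_le fun N => by
        rw [← ofReal_integral_eq_lintegral_ofReal (hmin N)
          (ae_of_all _ fun x => le_min (abs_nonneg _) (Nat.cast_nonneg N))]
        exact ENNReal.ofReal_le_ofReal (h N)
    _ < ⊤ := ENNReal.ofReal_lt_top

end Moments

section TestFunctions

variable {Ω E : Type*} [MeasurableSpace Ω] [PseudoMetricSpace E] [MeasurableSpace E]
  [BorelSpace E] {P : Measure Ω} {π : Ω → E} {f : Ω → ℝ}

lemma setIntegral_preimage_nonneg_of_isClosed (hπ : Measurable π) (hf : Integrable f P)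
    (h : ∀ ψ : E → ℝ, BLip ψ → (∀ z, 0 ≤ ψ z) → 0 ≤ ∫ y, ψ (π y) * f y ∂P)
    {F : Set E} (hF : IsClosed F) : 0 ≤ ∫ y in π ⁻¹' F, f y ∂P := by
  let ψ (m : ℕ) (z : E) : ℝ := thickenedIndicator (Nat.one_div_pos_of_nat (n := m)) F z
  have hψ_le m z : |ψ m z| ≤ 1 := by
    simpa [ψ] using thickenedIndicator_le_one (Nat.one_div_pos_of_nat (n := m)) F z
  have hψ_blip m : BLip (ψ m) :=
    ⟨⟨_, (LipschitzWith.subtype_val _).comp (lipschitzWith_thickenedIndicator _ F)⟩, 1, hψ_le m⟩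
  have hψ_lim z : Tendsto (fun m => ψ m z) atTop (𝓝 (F.indicator 1 z)) := by
    have := tendsto_pi_nhds.1 (thickenedIndicator_tendsto_indicator_closure
      (fun m : ℕ => Nat.one_div_pos_of_nat) tendsto_one_div_add_atTop_nhds_zero_nat F) z
    rw [hF.closure_eq] at this
    convert NNReal.tendsto_coe.2 this
    by_cases hz : z ∈ F <;> simp [hz]
  have hlim : Tendsto (fun m => ∫ y, ψ m (π y) * f y ∂P) atTop
      (𝓝 (∫ y in π ⁻¹' F, f y ∂P)) := by
    rw [← integral_indicator (hπ hF.measurableSet)]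
    refine tendsto_integral_of_dominated_convergence (fun y => |f y|)
      (fun m => ((hψ_blip m).continuous.measurable.comp hπ).aestronglyMeasurable.mul hf.1)
      hf.abs (fun m => ae_of_all _ fun y => ?_) (ae_of_all _ fun y => ?_)
    · rw [Real.norm_eq_abs, abs_mul]
      exact mul_le_of_le_one_left (abs_nonneg _) (hψ_le m (π y))
    · convert (hψ_lim (π y)).mul_const (f y) using 2
      by_cases hy : π y ∈ F <;> simp [hy]
  exact ge_of_tendsto' hlim fun m => h _ (hψ_blip m) fun z => NNReal.coe_nonneg _

lemma setIntegral_preimage_nonneg [IsFiniteMeasure P] (hπ : Measurable π) (hf : Integrable f P)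
    (h : ∀ ψ : E → ℝ, BLip ψ → (∀ z, 0 ≤ ψ z) → 0 ≤ ∫ y, ψ (π y) * f y ∂P)
    {B : Set E} (hB : MeasurableSet B) : 0 ≤ ∫ y in π ⁻¹' B, f y ∂P := by
  let ν : Measure E := (P.withDensity fun y => ‖f y‖ₑ).map π
  have : IsFiniteMeasure (P.withDensity fun y => ‖f y‖ₑ) :=
    isFiniteMeasure_withDensity hf.2.ne
  refine le_of_forall_pos_le_add fun ε hε => ?_
  obtain ⟨F, hFB, hF, hνF⟩ := hB.exists_isClosed_sdiff_lt (μ := ν) (measure_ne_top ν B)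
    (ENNReal.ofReal_pos.2 hε).ne'
  have hBF : MeasurableSet (π ⁻¹' (B \ F)) := hπ (hB.diff hF.measurableSet)
  have hsmall : |∫ y in π ⁻¹' (B \ F), f y ∂P| ≤ ε := by
    have hle : ‖∫ y in π ⁻¹' (B \ F), f y ∂P‖ₑ ≤ ν (B \ F) := by
      rw [Measure.map_apply hπ (hB.diff hF.measurableSet), withDensity_apply _ hBF]
      exact enorm_integral_le_lintegral_enorm _
    rw [Real.enorm_eq_ofReal_abs] at hle
    exact (ENNReal.ofReal_lt_ofReal_iff hε).1 (hle.trans_lt hνF) |>.le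
  rw [← Set.union_sdiff_cancel hFB, Set.preimage_union,
    setIntegral_union (Set.disjoint_sdiff_right.preimage π) hBF hf.integrableOn hf.integrableOn]
  linarith [setIntegral_preimage_nonneg_of_isClosed hπ hf h hF,
    neg_abs_le (∫ y in π ⁻¹' (B \ F), f y ∂P)]

end TestFunctions

lemma ae_nonneg_condExp_of_forall_setIntegral_nonneg {Ω : Type*} {m m₀ : MeasurableSpace Ω}
    (hm : m ≤ m₀) {μ : Measure Ω} [IsFiniteMeasure μ] {f : Ω → ℝ} (hf : Integrable f μ)
    (h : ∀ s, MeasurableSet[m] s → 0 ≤ ∫ x in s, f x ∂μ) : 0 ≤ᵐ[μ] μ[f | m] := by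
  refine ae_of_ae_trim hm <| ae_nonneg_of_forall_setIntegral_nonneg
    (integrable_condExp.trim hm stronglyMeasurable_condExp) fun s hs _ => ?_
  rw [← setIntegral_trim hm stronglyMeasurable_condExp hs, setIntegral_condExp hm hf hs]
  exact h s hs

lemma ae_nonneg_condExp_comap_of_forall_bLip {Ω E : Type*} [MeasurableSpace Ω]
    [PseudoMetricSpace E] [MeasurableSpace E] [BorelSpace E] {P : Measure Ω} [IsFiniteMeasure P]
    {π : Ω → E} (hπ : Measurable π) {f : Ω → ℝ} (hf : Integrable f P)
    (h : ∀ ψ : E → ℝ, BLip ψ → (∀ z, 0 ≤ ψ z) → 0 ≤ ∫ y, ψ (π y) * f y ∂P) :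
    0 ≤ᵐ[P] P[f | MeasurableSpace.comap π inferInstance] := by
  refine ae_nonneg_condExp_of_forall_setIntegral_nonneg hπ.comap_le hf ?_
  rintro _ ⟨B, hB, rfl⟩
  exact setIntegral_preimage_nonneg hπ hf h hB

section SublinearExpectation

variable {n : ℕ} {Pset : Set (Measure (Fin n → ℝ))} {ξ : (Fin n → ℝ) → ℝ} {C : ℝ}

lemma integral_le_SE (hC : ∀ Q ∈ Pset, ∫ x, ξ x ∂Q ≤ C) {Q : Measure (Fin n → ℝ)}
    (hQ : Q ∈ Pset) : ∫ x, ξ x ∂Q ≤ SE n Pset ξ :=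
  le_ciSup (f := fun Q : Pset => ∫ x, ξ x ∂(Q : Measure (Fin n → ℝ)))
    ⟨C, by rintro _ ⟨Q, rfl⟩; exact hC Q Q.2⟩ ⟨Q, hQ⟩

lemma SE_le (hne : Pset.Nonempty) (hC : ∀ Q ∈ Pset, ∫ x, ξ x ∂Q ≤ C) : SE n Pset ξ ≤ C :=
  have := hne.to_subtype
  ciSup_le fun Q => hC Q Q.2

lemma SE_zero : SE n Pset (fun _ => 0) = 0 := by
  simp only [SE, integral_zero, Real.iSup_const_zero]

lemma SE_const_mul_sub_SE (hne : Pset.Nonempty) (hprob : ∀ Q ∈ Pset, IsProbabilityMeasure Q)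
    {a : ℝ} (ha : 0 ≤ a) (hξ : ∀ Q ∈ Pset, Integrable ξ Q) (hC : ∀ Q ∈ Pset, ∫ x, ξ x ∂Q ≤ C) :
    SE n Pset (fun x => a * (ξ x - SE n Pset ξ)) = 0 := by
  have := hne.to_subtype
  have hQ (Q : Pset) : ∫ x, a * (ξ x - SE n Pset ξ) ∂(Q : Measure (Fin n → ℝ)) =
      a * (∫ x, ξ x ∂(Q : Measure (Fin n → ℝ)) - SE n Pset ξ) := by
    have := hprob Q Q.2
    rw [integral_const_mul, integral_sub (hξ Q Q.2) (integrable_const _), integral_const,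
      probReal_univ, one_smul]
  have hbdd : BddAbove (Set.range fun Q : Pset => ∫ x, ξ x ∂(Q : Measure (Fin n → ℝ))) :=
    ⟨C, by rintro _ ⟨Q, rfl⟩; exact hC Q Q.2⟩
  calc SE n Pset (fun x => a * (ξ x - SE n Pset ξ))
      = ⨆ Q : Pset, a * (∫ x, ξ x ∂(Q : Measure (Fin n → ℝ)) - SE n Pset ξ) :=
        congrArg iSup (funext hQ)
    _ = a * (SE n Pset ξ - SE n Pset ξ) := by
        rw [← Real.mul_iSup_of_nonneg ha, ← ciSup_sub hbdd]; rfl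
    _ = 0 := by rw [sub_self, mul_zero]

lemma SE_trunc_le (hne : Pset.Nonempty) (hprob : ∀ Q ∈ Pset, IsProbabilityMeasure Q)
    (hξ : Measurable ξ) {α M : ℝ} (hα : 0 ≤ α)
    (hint : ∀ Q ∈ Pset, Integrable (fun x => |ξ x| ^ (1 + α)) Q)
    (hM : ∀ Q ∈ Pset, ∫ x, |ξ x| ^ (1 + α) ∂Q ≤ M) {N : ℝ} (hN : 0 < N) :
    SE n Pset (fun x => trunc N (ξ x)) ≤ SE n Pset ξ + M / N ^ α := by
  have hξQ Q (hQ : Q ∈ Pset) : Integrable ξ Q :=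
    have := hprob Q hQ
    integrable_of_integrable_abs_rpow hα hξ.aestronglyMeasurable (hint Q hQ)
  have hbdd Q (hQ : Q ∈ Pset) : ∫ x, ξ x ∂Q ≤ 1 + M := by
    have := hprob Q hQ
    calc ∫ x, ξ x ∂Q ≤ ∫ x, |ξ x| ∂Q := (le_abs_self _).trans abs_integral_le_integral_abs
      _ ≤ 1 + ∫ x, |ξ x| ^ (1 + α) ∂Q :=
        integral_abs_le_one_add_integral_abs_rpow hα hξ.aestronglyMeasurable (hint Q hQ)
      _ ≤ 1 + M := by linarith [hM Q hQ]
  refine SE_le hne fun Q hQ => ?_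
  have := hprob Q hQ
  have htrunc : Integrable (fun x => trunc N (ξ x)) Q :=
    (bLip_trunc_comp hN.le LipschitzWith.id).integrable.comp_measurable hξ
  have herr : ∫ x, (trunc N (ξ x) - ξ x) ∂Q ≤ M / N ^ α := by
    refine (integral_mono (htrunc.sub (hξQ Q hQ)) ((hint Q hQ).div_const _)
      fun x => (le_abs_self _).trans (abs_trunc_sub_le_rpow hN hα)).trans ?_
    rw [integral_div]
    gcongr
    exact hM Q hQ
  rw [integral_sub htrunc (hξQ Q hQ)] at herr
  linarith [integral_le_SE hbdd hQ]

lemma integrable_of_le_SE_of_moment_le (hne : Pset.Nonempty)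
    (hprob : ∀ Q ∈ Pset, IsProbabilityMeasure Q) {P : Measure (Fin n → ℝ)} [IsFiniteMeasure P]
    (hP : ∀ φ : (Fin n → ℝ) → ℝ, BLip φ → ∫ x, φ x ∂P ≤ SE n Pset φ) {K : NNReal}
    (hξ : LipschitzWith K ξ) {α M : ℝ} (hα : 0 ≤ α)
    (hint : ∀ Q ∈ Pset, Integrable (fun x => |ξ x| ^ (1 + α)) Q)
    (hM : ∀ Q ∈ Pset, ∫ x, |ξ x| ^ (1 + α) ∂Q ≤ M) : Integrable ξ P := by
  refine integrable_of_forall_integral_min_abs_le hξ.continuous.measurable (C := 1 + M)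
    fun N => (hP _ ?_).trans (SE_le hne fun Q hQ => ?_)
  · refine ⟨⟨1 * K, (lipschitzWith_one_norm.comp hξ).min_const N⟩, N, fun x => ?_⟩
    rw [abs_of_nonneg (le_min (abs_nonneg _) (Nat.cast_nonneg N))]
    exact min_le_right _ _
  · have := hprob Q hQ
    have hξQ := integrable_of_integrable_abs_rpow hα hξ.continuous.aestronglyMeasurable (hint Q hQ)
    calc ∫ x, min |ξ x| N ∂Q ≤ ∫ x, |ξ x| ∂Q :=
          integral_mono_of_nonneg (ae_of_all _ fun x => le_min (abs_nonneg _) (Nat.cast_nonneg N))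
            hξQ.abs (ae_of_all _ fun x => min_le_left _ _)
      _ ≤ 1 + ∫ x, |ξ x| ^ (1 + α) ∂Q :=
          integral_abs_le_one_add_integral_abs_rpow hα hξQ.1 (hint Q hQ)
      _ ≤ 1 + M := by linarith [hM Q hQ]

end SublinearExpectation

/-- Independence of `X_{j+1}` from `(X_1, …, X_j)` under `Ê`; the coordinate `X_{j+1}` is
`x ⟨j, hjn⟩`. -/
def IndepUnderSE {n j : ℕ} (Pset : Set (Measure (Fin n → ℝ))) (hjn : j < n) : Prop :=
  ∀ φ : (Fin (j + 1) → ℝ) → ℝ, BLip φ →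
    SE n Pset (fun x => φ (Fin.take (j + 1) hjn x)) =
      SE n Pset (fun x => SE n Pset (fun x' =>
        φ (Fin.snoc (Fin.take j hjn.le x : Fin j → ℝ) (x' ⟨j, hjn⟩))))

section Independence

variable {n j : ℕ} {hjn : j < n} {Pset : Set (Measure (Fin n → ℝ))}

theorem integral_mul_le_SE_mul_integral (hne : Pset.Nonempty)
    (hprob : ∀ Q ∈ Pset, IsProbabilityMeasure Q) (hindep : IndepUnderSE Pset hjn)
    {P : Measure (Fin n → ℝ)} [IsFiniteMeasure P]
    (hP : ∀ φ : (Fin n → ℝ) → ℝ, BLip φ → ∫ x, φ x ∂P ≤ SE n Pset φ)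
    {ψ : (Fin j → ℝ) → ℝ} (hψ : BLip ψ) (hψ0 : ∀ z, 0 ≤ ψ z) {g : ℝ → ℝ} (hg : BLip g) :
    ∫ x, ψ (Fin.take j hjn.le x) * g (x ⟨j, hjn⟩) ∂P ≤
      SE n Pset (fun x => g (x ⟨j, hjn⟩)) * ∫ x, ψ (Fin.take j hjn.le x) ∂P := by
  set c := SE n Pset (fun x => g (x ⟨j, hjn⟩))
  have hψX : BLip fun x : Fin n → ℝ => ψ (Fin.take j hjn.le x) :=
    hψ.comp_lipschitzWith (lipschitzWith_one_comp_right _)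
  have hgX : BLip fun x : Fin n → ℝ => g (x ⟨j, hjn⟩) :=
    hg.comp_lipschitzWith (LipschitzWith.eval _)
  let φ (z : Fin (j + 1) → ℝ) : ℝ := ψ (Fin.init z) * (g (z (Fin.last j)) - c)
  have hφ : BLip φ :=
    (hψ.comp_lipschitzWith (lipschitzWith_one_comp_right _)).mul
      ((hg.comp_lipschitzWith (LipschitzWith.eval _)).sub_const c)
  have hinner (x : Fin n → ℝ) :
      SE n Pset (fun x' => φ (Fin.snoc (Fin.take j hjn.le x : Fin j → ℝ) (x' ⟨j, hjn⟩))) = 0 := by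
    obtain ⟨Mg, hMg⟩ := hg.2
    simp only [φ, Fin.init_snoc, Fin.snoc_last]
    refine SE_const_mul_sub_SE hne hprob (hψ0 _) (C := Mg) (fun Q hQ => ?_) fun Q hQ => ?_
    all_goals have := hprob Q hQ
    · exact hgX.integrable
    · calc ∫ x, g (x ⟨j, hjn⟩) ∂Q ≤ ∫ _, Mg ∂Q :=
            integral_mono hgX.integrable (integrable_const _) fun x => (le_abs_self _).trans (hMg _)
        _ = Mg := by simp
  have hφX (x : Fin n → ℝ) : φ (Fin.take (j + 1) hjn x) =
      ψ (Fin.take j hjn.le x) * g (x ⟨j, hjn⟩) - ψ (Fin.take j hjn.le x) * c := by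
    rw [Fin.take_succ_eq_snoc]
    simp only [φ, Fin.init_snoc, Fin.snoc_last, mul_sub]
  have hdom : ∫ x, φ (Fin.take (j + 1) hjn x) ∂P ≤
      SE n Pset (fun x => φ (Fin.take (j + 1) hjn x)) :=
    hP _ (hφ.comp_lipschitzWith (lipschitzWith_one_comp_right _))
  rw [hindep φ hφ, funext hinner, SE_zero, funext hφX,
    integral_sub (hψX.mul hgX).integrable (hψX.integrable.mul_const c), integral_mul_const] at hdom
  linarith

theorem integral_mul_coord_le_SE_mul_integral (hne : Pset.Nonempty)
    (hprob : ∀ Q ∈ Pset, IsProbabilityMeasure Q) (hindep : IndepUnderSE Pset hjn) {α M : ℝ}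
    (hα : 0 < α) (hint : ∀ Q ∈ Pset, Integrable (fun x => |x ⟨j, hjn⟩| ^ (1 + α)) Q)
    (hM : ∀ Q ∈ Pset, ∫ x, |x ⟨j, hjn⟩| ^ (1 + α) ∂Q ≤ M)
    {P : Measure (Fin n → ℝ)} [IsFiniteMeasure P]
    (hP : ∀ φ : (Fin n → ℝ) → ℝ, BLip φ → ∫ x, φ x ∂P ≤ SE n Pset φ)
    (hXP : Integrable (fun x => x ⟨j, hjn⟩) P) (e : ℝ)
    {ψ : (Fin j → ℝ) → ℝ} (hψ : BLip ψ) (hψ0 : ∀ z, 0 ≤ ψ z) :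
    ∫ x, ψ (Fin.take j hjn.le x) * (e * x ⟨j, hjn⟩) ∂P ≤
      SE n Pset (fun x => e * x ⟨j, hjn⟩) * ∫ x, ψ (Fin.take j hjn.le x) ∂P := by
  set c := SE n Pset (fun x => e * x ⟨j, hjn⟩)
  set M' := |e| ^ (1 + α) * M
  have habs (x : Fin n → ℝ) :
      |e * x ⟨j, hjn⟩| ^ (1 + α) = |e| ^ (1 + α) * |x ⟨j, hjn⟩| ^ (1 + α) := by
    rw [abs_mul, Real.mul_rpow (abs_nonneg _) (abs_nonneg _)]
  have hintY Q (hQ : Q ∈ Pset) : Integrable (fun x => |e * x ⟨j, hjn⟩| ^ (1 + α)) Q := by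
    simpa only [habs] using (hint Q hQ).const_mul _
  have hMY Q (hQ : Q ∈ Pset) : ∫ x, |e * x ⟨j, hjn⟩| ^ (1 + α) ∂Q ≤ M' := by
    simp only [habs, integral_const_mul, M']
    exact mul_le_mul_of_nonneg_left (hM Q hQ) (by positivity)
  have hstep (N : ℕ) (hN : 0 < N) :
      ∫ x, ψ (Fin.take j hjn.le x) * trunc N (e * x ⟨j, hjn⟩) ∂P ≤
        (c + M' / (N : ℝ) ^ α) * ∫ x, ψ (Fin.take j hjn.le x) ∂P :=
    (integral_mul_le_SE_mul_integral hne hprob hindep hP hψ hψ0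
      (bLip_trunc_comp (Nat.cast_nonneg N) (lipschitzWith_smul e))).trans <|
    mul_le_mul_of_nonneg_right
      (SE_trunc_le hne hprob ((measurable_pi_apply _).const_mul e) hα.le hintY hMY
        (Nat.cast_pos.2 hN))
      (integral_nonneg fun x => hψ0 _)
  have herr : Tendsto (fun N : ℕ => (c + M' / (N : ℝ) ^ α) * ∫ x, ψ (Fin.take j hjn.le x) ∂P)
      atTop (𝓝 (c * ∫ x, ψ (Fin.take j hjn.le x) ∂P)) := by
    simpa using ((tendsto_const_nhds.div_atTop
      ((tendsto_rpow_atTop hα).comp tendsto_natCast_atTop_atTop)).const_add c).mul_const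
      (∫ x, ψ (Fin.take j hjn.le x) ∂P)
  obtain ⟨Mψ, hMψ⟩ := hψ.2
  exact le_of_tendsto_of_tendsto
    (tendsto_integral_mul_trunc (hψ.continuous.measurable.comp
      (measurable_pi_lambda _ fun i => measurable_pi_apply _)).aestronglyMeasurable
      (fun x => hMψ _) (hXP.const_mul e))
    herr ((eventually_gt_atTop 0).mono hstep)

theorem condExp_coord_mul_le_SE (hne : Pset.Nonempty)
    (hprob : ∀ Q ∈ Pset, IsProbabilityMeasure Q) (hindep : IndepUnderSE Pset hjn) {α M : ℝ}
    (hα : 0 < α) (hint : ∀ Q ∈ Pset, Integrable (fun x => |x ⟨j, hjn⟩| ^ (1 + α)) Q)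
    (hM : ∀ Q ∈ Pset, ∫ x, |x ⟨j, hjn⟩| ^ (1 + α) ∂Q ≤ M)
    {P : Measure (Fin n → ℝ)} [IsFiniteMeasure P]
    (hP : ∀ φ : (Fin n → ℝ) → ℝ, BLip φ → ∫ x, φ x ∂P ≤ SE n Pset φ)
    (hXP : Integrable (fun x => x ⟨j, hjn⟩) P) (e : ℝ) :
    P[fun x => e * x ⟨j, hjn⟩ | MeasurableSpace.comap (Fin.take j hjn.le) inferInstance] ≤ᵐ[P]
      fun _ => SE n Pset (fun x => e * x ⟨j, hjn⟩) := by
  set c := SE n Pset (fun x => e * x ⟨j, hjn⟩)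
  have hπ : Measurable (Fin.take j hjn.le : (Fin n → ℝ) → Fin j → ℝ) :=
    measurable_pi_lambda _ fun i => measurable_pi_apply _
  have hYP : Integrable (fun x => e * x ⟨j, hjn⟩) P := hXP.const_mul e
  have hnonneg := ae_nonneg_condExp_comap_of_forall_bLip hπ ((integrable_const c).sub hYP)
    fun ψ hψ hψ0 => by
      have hψX : Integrable (fun x => ψ (Fin.take j hjn.le x)) P :=
        (hψ.comp_lipschitzWith (lipschitzWith_one_comp_right _)).integrable
      have := integral_mul_coord_le_SE_mul_integral hne hprob hindep hα hint hM hP hXP e hψ hψ0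
      obtain ⟨Mψ, hMψ⟩ := hψ.2
      simp only [Pi.sub_apply, mul_sub]
      rw [integral_sub (hψX.mul_const c) (hYP.bdd_mul hψX.1 (ae_of_all _ fun x => hMψ _)),
        integral_mul_const]
      linarith
  filter_upwards [hnonneg, condExp_sub (integrable_const c) hYP _] with x h1 h2
  rw [h2, Pi.sub_apply, condExp_const hπ.comap_le] at h1
  simpa using h1

end Independence

theorem condexp_bounds_of_indep_general
    (n j : ℕ) (hjn : j < n)
    (Pset : Set (Measure (Fin n → ℝ))) (hne : Pset.Nonempty)
    (hprob : ∀ Q ∈ Pset, IsProbabilityMeasure Q)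
    (hindep : ∀ φ : (Fin (j + 1) → ℝ) → ℝ, BLip φ →
      SE n Pset (fun x => φ (fun i => x (Fin.castLE hjn i))) =
        SE n Pset (fun x => SE n Pset (fun x' =>
          φ (Fin.snoc (fun i : Fin j => x (Fin.castLE hjn.le i)) (x' ⟨j, hjn⟩)))))
    (α : ℝ) (hα : 0 < α)
    (hint : ∀ Q ∈ Pset, Integrable (fun x : Fin n → ℝ => |x ⟨j, hjn⟩| ^ (1 + α)) Q)
    (hmom : BddAbove
      ((fun Q : Measure (Fin n → ℝ) => ∫ x, |x ⟨j, hjn⟩| ^ (1 + α) ∂Q) '' Pset))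
    (P : Measure (Fin n → ℝ)) [IsProbabilityMeasure P]
    (hP : ∀ φ : (Fin n → ℝ) → ℝ, BLip φ → ∫ x, φ x ∂P ≤ SE n Pset φ) :
    ∀ᵐ x ∂P,
      -(SE n Pset (fun y => -(y ⟨j, hjn⟩))) ≤
          (P[fun y : Fin n → ℝ => y ⟨j, hjn⟩ |
            MeasurableSpace.comap
              (fun y : Fin n → ℝ => fun i : Fin j => y (Fin.castLE hjn.le i))
              inferInstance]) x ∧
        (P[fun y : Fin n → ℝ => y ⟨j, hjn⟩ |
            MeasurableSpace.comap
              (fun y : Fin n → ℝ => fun i : Fin j => y (Fin.castLE hjn.le i))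
              inferInstance]) x ≤ SE n Pset (fun y => y ⟨j, hjn⟩) := by
  obtain ⟨M, hM⟩ := hmom
  have hMQ Q (hQ : Q ∈ Pset) : ∫ x, |x ⟨j, hjn⟩| ^ (1 + α) ∂Q ≤ M := hM ⟨Q, hQ, rfl⟩
  have hXP : Integrable (fun x : Fin n → ℝ => x ⟨j, hjn⟩) P :=
    integrable_of_le_SE_of_moment_le hne hprob hP (LipschitzWith.eval _) hα.le hint hMQ
  have hbound (e : ℝ) := condExp_coord_mul_le_SE hne hprob hindep hα hint hMQ hP hXP e
  change ∀ᵐ x ∂P, _ ≤ (P[_ | MeasurableSpace.comap (Fin.take j hjn.le) _]) x ∧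
    (P[_ | MeasurableSpace.comap (Fin.take j hjn.le) _]) x ≤ _
  filter_upwards [hbound 1, hbound (-1), condExp_neg (fun x : Fin n → ℝ => x ⟨j, hjn⟩) _]
    with x hup hlo hneg
  simp only [one_mul, neg_one_mul] at hup hlo
  simp only [Pi.neg_def] at hneg
  exact ⟨by linarith, hup⟩

/-- Proposition 2.1: if `X_{j+1}` is independent of `(X_1, …, X_j)` under the
sublinear expectation and has a finite `(1+α)`-moment, then for every probability
measure `P` dominated by `Ê` on bounded Lipschitz functions, the conditional
expectation of `X_{j+1}` given `σ(X_1, …, X_j)` lies in `[-Ê[-X_{j+1}], Ê[X_{j+1}]]`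
`P`-almost surely. -/
theorem condexp_bounds_of_indep
    (n j : ℕ) (hj1 : 1 ≤ j) (hjn : j < n)
    (Pset : Set (Measure (Fin n → ℝ))) (hne : Pset.Nonempty)
    (hprob : ∀ Q ∈ Pset, IsProbabilityMeasure Q)
    (hindep : ∀ φ : (Fin (j + 1) → ℝ) → ℝ, BLip φ →
      SE n Pset (fun x => φ (fun i => x (Fin.castLE hjn i))) =
        SE n Pset (fun x => SE n Pset (fun x' =>
          φ (Fin.snoc (fun i : Fin j => x (Fin.castLE hjn.le i)) (x' ⟨j, hjn⟩)))))
    (α : ℝ) (hα : 0 < α)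
    (hint : ∀ Q ∈ Pset, Integrable (fun x : Fin n → ℝ => |x ⟨j, hjn⟩| ^ (1 + α)) Q)
    (hmom : BddAbove
      ((fun Q : Measure (Fin n → ℝ) => ∫ x, |x ⟨j, hjn⟩| ^ (1 + α) ∂Q) '' Pset))
    (P : Measure (Fin n → ℝ)) [IsProbabilityMeasure P]
    (hP : ∀ φ : (Fin n → ℝ) → ℝ, BLip φ → ∫ x, φ x ∂P ≤ SE n Pset φ) :
    ∀ᵐ x ∂P,
      -(SE n Pset (fun y => -(y ⟨j, hjn⟩))) ≤
          (P[fun y : Fin n → ℝ => y ⟨j, hjn⟩ |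
            MeasurableSpace.comap
              (fun y : Fin n → ℝ => fun i : Fin j => y (Fin.castLE hjn.le i))
              inferInstance]) x ∧
        (P[fun y : Fin n → ℝ => y ⟨j, hjn⟩ |
            MeasurableSpace.comap
              (fun y : Fin n → ℝ => fun i : Fin j => y (Fin.castLE hjn.le i))
              inferInstance]) x ≤ SE n Pset (fun y => y ⟨j, hjn⟩) :=
  condexp_bounds_of_indep_general n j hjn Pset hne hprob hindep α hα hint hmom P hP
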